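/- arXiv:1709.00916 — 3 statements merged into one kernel-verified Lean document; each statement's English description precedes it below -/
import Mathlib

section
/- Let H be a complex Hilbert space and let A be a bounded self-adjoint operator on H which is positive, i.e. ⟨A x, x⟩ ≥ 0 for all x ∈ H. Then for all t₀, t ∈ (0,∞), the operator norm of exp(−t₀ A) − exp(−(t₀+t) A) is at most t/(t₀+t). -/
/-- Scalar bound: for `0 < a < b` and `x ≥ 0`, `e^{-ax} - e^{-bx} ≤ (b-a)/b`. -/
lemma scalar_key {a b x : ℝ} (ha : 0 < a) (hab : a < b) (hx : 0 ≤ x) :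
    Real.exp (-(a * x)) - Real.exp (-(b * x)) ≤ (b - a) / b := by
  have hb : 0 < b := ha.trans hab
  rcases le_or_gt ((b - a) * x) 1 with hc | hc
  · have h1 : 1 - Real.exp (-((b - a) * x)) ≤ (b - a) * x := by
      nlinarith [Real.add_one_le_exp (-((b - a) * x))]
    have h2 : Real.exp (-(a * x)) ≤ 1 / (1 + a * x) := by
      rw [Real.exp_neg]
      have := Real.add_one_le_exp (a * x)
      have hpos : (0:ℝ) < 1 + a * x := by nlinarith
      rw [inv_le_comm₀ (Real.exp_pos _) (by positivity), one_div, inv_inv]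
      linarith
    have key : Real.exp (-(a * x)) - Real.exp (-(b * x))
        = Real.exp (-(a * x)) * (1 - Real.exp (-((b - a) * x))) := by
      rw [mul_sub, mul_one, ← Real.exp_add]; ring_nf
    rw [key]
    have hE := Real.exp_pos (-(a * x))
    have step : Real.exp (-(a * x)) * (1 - Real.exp (-((b - a) * x)))
        ≤ ((b - a) * x) / (1 + a * x) := by
      calc Real.exp (-(a * x)) * (1 - Real.exp (-((b - a) * x)))
          ≤ Real.exp (-(a * x)) * ((b - a) * x) := by
            apply mul_le_mul_of_nonneg_left h1 hE.le
        _ ≤ (1 / (1 + a * x)) * ((b - a) * x) := by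
            apply mul_le_mul_of_nonneg_right h2 (by nlinarith)
        _ = ((b - a) * x) / (1 + a * x) := by ring
    refine step.trans ?_
    rw [div_le_div_iff₀ (by nlinarith) hb]
    nlinarith
  · have h1 : a / (b - a) ≤ a * x := by
      rw [div_le_iff₀ (by linarith)]
      nlinarith
    have h2 : Real.exp (-(a * x)) ≤ Real.exp (-(a / (b - a))) :=
      Real.exp_le_exp.mpr (by linarith)
    have h3 : Real.exp (-(a / (b - a))) ≤ (b - a) / b := by
      rw [Real.exp_neg]
      have hba : (0:ℝ) < b - a := by linarith
      have hpos : (0:ℝ) < 1 + a / (b - a) := by positivity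
      have := Real.add_one_le_exp (a / (b - a))
      rw [inv_le_comm₀ (Real.exp_pos _) (by positivity)]
      calc ((b - a) / b)⁻¹ = 1 + a / (b - a) := by
            rw [inv_div]; field_simp; ring
        _ ≤ Real.exp (a / (b - a)) := by linarith
    nlinarith [Real.exp_pos (-(b * x))]

set_option maxHeartbeats 1000000 in
open scoped ComplexInnerProductSpace in
/-- Let `H` be a complex Hilbert space and `A` a bounded self-adjoint
positive operator on `H` (i.e. `⟨A x, x⟩ ≥ 0` for all `x`, the inner product being
real-valued by self-adjointness). Then for all `t₀, t ∈ (0,∞)`,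
`‖exp(−t₀ A) − exp(−(t₀+t) A)‖ ≤ t/(t₀+t)`. -/
theorem stmt_6 {H : Type*} [NormedAddCommGroup H] [InnerProductSpace ℂ H]
    [CompleteSpace H] (A : H →L[ℂ] H) (hA : IsSelfAdjoint A)
    (hpos : ∀ x : H, 0 ≤ (⟪A x, x⟫ : ℂ).re)
    (t₀ t : ℝ) (ht₀ : 0 < t₀) (ht : 0 < t) :
    ‖NormedSpace.exp ((-(t₀ : ℂ)) • A) - NormedSpace.exp ((-((t₀ : ℂ) + (t : ℂ))) • A)‖
      ≤ t / (t₀ + t) := by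
  have hb : (0:ℝ) < t₀ + t := by linarith
  have h0A : (0 : H →L[ℂ] H) ≤ A := by
    rw [ContinuousLinearMap.nonneg_iff_isPositive, ContinuousLinearMap.isPositive_def']
    exact ⟨hA, fun x => hpos x⟩
  have hspec : ∀ x ∈ spectrum ℝ A, (0:ℝ) ≤ x := spectrum_nonneg_of_nonneg h0A
  have e1 : (-(t₀ : ℂ)) • A = (-t₀ : ℝ) • A := by
    rw [← Complex.coe_smul]; norm_num
  have e2 : (-((t₀ : ℂ) + (t : ℂ))) • A = (-(t₀ + t) : ℝ) • A := by
    rw [← Complex.coe_smul]; norm_num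
  have key : ∀ (c : ℝ), NormedSpace.exp ((-c : ℝ) • A)
      = cfc (fun x : ℝ => Real.exp (-c * x)) A := by
    intro c
    have hsc : IsSelfAdjoint ((-c : ℝ) • A) := by
      rw [IsSelfAdjoint, star_smul, star_trivial, hA.star_eq]
    rw [← CFC.real_exp_eq_normedSpace_exp hsc,
      ← cfc_comp_smul (-c) Real.exp A (by fun_prop) hA]
    simp [smul_eq_mul]
  rw [e1, e2, key, key, ← cfc_sub _ _ A (by fun_prop) (by fun_prop)]
  refine norm_cfc_le (by positivity) fun x hx => ?_
  have hx0 := hspec x hx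
  have hle : Real.exp (-(t₀ + t) * x) ≤ Real.exp (-t₀ * x) :=
    Real.exp_le_exp.mpr (by nlinarith)
  rw [Real.norm_eq_abs, abs_of_nonneg (by linarith)]
  have := scalar_key (a := t₀) (b := t₀ + t) ht₀ (by linarith) hx0
  have heq : (t₀ + t - t₀) / (t₀ + t) = t / (t₀ + t) := by ring_nf
  rw [heq] at this
  calc Real.exp (-t₀ * x) - Real.exp (-(t₀ + t) * x)
      = Real.exp (-(t₀ * x)) - Real.exp (-((t₀ + t) * x)) := by ring_nf
    _ ≤ t / (t₀ + t) := this
end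

section
/- Let d ∈ (0,2), c > 0, T > 0, and let (λ_k)_{k≥1} be a sequence of non-negative real numbers such that λ_k ≥ c·k^{2/d} for all k ≥ 2. Then lim_{h → 0⁺} ∑_{k=1}^∞ ∫_0^T e^{−2 λ_k s} ( e^{−λ_k h} − 1 )² ds = 0 and lim_{h → 0⁺} ∑_{k=1}^∞ ∫_0^h e^{−2 λ_k s} ds = 0. -/
open Filter Real Set intervalIntegral

lemma int_exp_zero_to (a x : ℝ) (ha : a ≠ 0) :
    ∫ s in (0:ℝ)..x, Real.exp (a * s) = (Real.exp (a * x) - 1) / a := by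
  rw [intervalIntegral.integral_comp_mul_left (fun u => Real.exp u) ha]
  simp [integral_exp, smul_eq_mul]
  ring

lemma key_bound_aux (d c T : ℝ) (hd : d ∈ Set.Ioo (0 : ℝ) 2) (hc : 0 < c)
    (lam : ℕ → ℝ) (hnn : ∀ k : ℕ, 1 ≤ k → 0 ≤ lam k)
    (hlb : ∀ k : ℕ, 2 ≤ k → c * (k : ℝ) ^ (2 / d) ≤ lam k) :
    ∀ (k : ℕ), 1 ≤ k → ∀ x : ℝ, 0 ≤ x → x ≤ max T 1 →
      0 ≤ (∫ s in (0:ℝ)..x, Real.exp (-2 * lam k * s)) ∧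
      (∫ s in (0:ℝ)..x, Real.exp (-2 * lam k * s)) ≤
        max (max T 1) (1 / (2 * c)) / (k : ℝ) ^ (2 / d) := by
  obtain ⟨hd0, hd2⟩ := hd
  set M : ℝ := max (max T 1) (1 / (2 * c)) with hM
  intro k hk x hx0 hx1
  have hl0 : 0 ≤ lam k := hnn k hk
  constructor
  · exact intervalIntegral.integral_nonneg hx0 (fun s _ => (Real.exp_pos _).le)
  by_cases hk2 : 2 ≤ k
  · have hlpos : 0 < lam k := lt_of_lt_of_le (by positivity) (hlb k hk2)
    have ha : (-2 * lam k) ≠ 0 := by nlinarith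
    rw [int_exp_zero_to _ _ ha]
    have hkpow : 0 < (k : ℝ) ^ (2 / d) := by positivity
    have h1 : (Real.exp (-2 * lam k * x) - 1) / (-2 * lam k)
        = (1 - Real.exp (-2 * lam k * x)) / (2 * lam k) := by
      rw [div_eq_div_iff ha (by nlinarith)]; ring
    rw [h1]
    have h2 : (1 - Real.exp (-2 * lam k * x)) / (2 * lam k) ≤ 1 / (2 * lam k) := by
      gcongr
      nlinarith [Real.exp_pos (-2 * lam k * x)]
    have h3 : 1 / (2 * lam k) ≤ 1 / (2 * (c * (k:ℝ) ^ (2/d))) := by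
      apply one_div_le_one_div_of_le (by positivity) (by nlinarith [hlb k hk2])
    have h4 : 1 / (2 * (c * (k:ℝ) ^ (2/d))) = (1 / (2*c)) / (k:ℝ)^(2/d) := by
      field_simp
    have h5 : (1 / (2*c)) / (k:ℝ)^(2/d) ≤ M / (k:ℝ)^(2/d) := by
      gcongr
      exact le_max_right _ _
    linarith
  · have hk1 : k = 1 := by omega
    subst hk1
    have hcont : Continuous fun s : ℝ => Real.exp (-2 * lam 1 * s) := by fun_prop
    have hmono : (∫ s in (0:ℝ)..x, Real.exp (-2 * lam 1 * s)) ≤ ∫ s in (0:ℝ)..x, (1:ℝ) := by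
      apply intervalIntegral.integral_mono_on hx0 (hcont.intervalIntegrable _ _)
        intervalIntegrable_const
      intro s hs
      have : -2 * lam 1 * s ≤ 0 := by nlinarith [hs.1]
      calc Real.exp (-2 * lam 1 * s) ≤ Real.exp 0 := Real.exp_le_exp.2 this
        _ = 1 := Real.exp_zero
    simp only [intervalIntegral.integral_const, smul_eq_mul, mul_one, sub_zero] at hmono
    have : ((1:ℕ):ℝ) ^ (2/d) = 1 := by norm_num
    rw [this, div_one]
    calc (∫ s in (0:ℝ)..x, Real.exp (-2 * lam 1 * s)) ≤ x := hmono
      _ ≤ max T 1 := hx1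
      _ ≤ M := le_max_left _ _



open Filter in
/-- Let `d ∈ (0,2)`, `c > 0`, `T > 0`, and `(λ_k)_{k≥1}` non-negative with
`λ_k ≥ c·k^{2/d}` for `k ≥ 2`. Then, as `h → 0⁺`,
`∑_{k=1}^∞ ∫_0^T e^{−2λ_k s}(e^{−λ_k h} − 1)² ds → 0` and
`∑_{k=1}^∞ ∫_0^h e^{−2λ_k s} ds → 0`. -/
theorem stmt_10 (d c T : ℝ) (hd : d ∈ Set.Ioo (0 : ℝ) 2) (hc : 0 < c) (hT : 0 < T)
    (lam : ℕ → ℝ) (hnn : ∀ k : ℕ, 1 ≤ k → 0 ≤ lam k)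
    (hlb : ∀ k : ℕ, 2 ≤ k → c * (k : ℝ) ^ (2 / d) ≤ lam k) :
    Tendsto (fun h : ℝ => ∑' k : {k : ℕ // 1 ≤ k},
        ∫ s in (0 : ℝ)..T, Real.exp (-2 * lam k.val * s) * (Real.exp (-lam k.val * h) - 1) ^ 2)
      (nhdsWithin 0 (Set.Ioi 0)) (nhds 0) ∧
    Tendsto (fun h : ℝ => ∑' k : {k : ℕ // 1 ≤ k},
        ∫ s in (0 : ℝ)..h, Real.exp (-2 * lam k.val * s))
      (nhdsWithin 0 (Set.Ioi 0)) (nhds 0) := by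
  have key := key_bound_aux d c T hd hc lam hnn hlb
  set M : ℝ := max (max T 1) (1 / (2 * c)) with hM
  have hp : 1 < 2 / d := (one_lt_div hd.1).2 hd.2
  have hgsum : Summable (fun k : {k : ℕ // 1 ≤ k} => M / (k.1 : ℝ) ^ (2 / d)) := by
    have h0 : Summable (fun n : ℕ => M / (n : ℝ) ^ (2 / d)) := by
      simpa [div_eq_mul_inv] using (Real.summable_nat_rpow_inv.mpr hp).mul_left M
    exact h0.comp_injective Subtype.val_injective
  have h0tsum : (0 : ℝ) = ∑' _ : {k : ℕ // 1 ≤ k}, (0 : ℝ) := by simp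
  constructor
  · rw [show nhds (0:ℝ) = nhds (∑' _ : {k : ℕ // 1 ≤ k}, (0:ℝ)) by rw [← h0tsum]]
    apply tendsto_tsum_of_dominated_convergence hgsum
    · intro k
      have hfe : (fun h : ℝ => ∫ s in (0:ℝ)..T,
            Real.exp (-2 * lam k.1 * s) * (Real.exp (-lam k.1 * h) - 1) ^ 2)
          = fun h : ℝ => (∫ s in (0:ℝ)..T, Real.exp (-2 * lam k.1 * s))
              * (Real.exp (-lam k.1 * h) - 1) ^ 2 := by
        funext h; exact intervalIntegral.integral_mul_const _ _
      rw [hfe]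
      have hcont : Continuous fun h : ℝ => (∫ s in (0:ℝ)..T, Real.exp (-2 * lam k.1 * s))
          * (Real.exp (-lam k.1 * h) - 1) ^ 2 := by fun_prop
      have := (hcont.tendsto 0).mono_left (nhdsWithin_le_nhds (s := Set.Ioi 0))
      simpa using this
    · filter_upwards [self_mem_nhdsWithin] with h hh k
      have hh0 : (0:ℝ) < h := hh
      obtain ⟨CI0, CIle⟩ := key k k.2 T hT.le (le_max_left _ _)
      rw [intervalIntegral.integral_mul_const]
      have hl0 : 0 ≤ lam k.1 := hnn k.1 k.2
      have hsq : (Real.exp (-lam k.1 * h) - 1) ^ 2 ≤ 1 := by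
        have h1 : Real.exp (-lam k.1 * h) ≤ 1 := by
          rw [← Real.exp_zero]; exact Real.exp_le_exp.2 (by nlinarith)
        have h2 : 0 < Real.exp (-lam k.1 * h) := Real.exp_pos _
        nlinarith
      rw [Real.norm_eq_abs, abs_of_nonneg (mul_nonneg CI0 (sq_nonneg _))]
      calc (∫ s in (0:ℝ)..T, Real.exp (-2 * lam k.1 * s)) * (Real.exp (-lam k.1 * h) - 1) ^ 2
          ≤ (∫ s in (0:ℝ)..T, Real.exp (-2 * lam k.1 * s)) * 1 := by
            exact mul_le_mul_of_nonneg_left hsq CI0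
        _ = _ := mul_one _
        _ ≤ M / (k.1 : ℝ) ^ (2 / d) := CIle
  · rw [show nhds (0:ℝ) = nhds (∑' _ : {k : ℕ // 1 ≤ k}, (0:ℝ)) by rw [← h0tsum]]
    apply tendsto_tsum_of_dominated_convergence hgsum
    · intro k
      have hl0 : 0 ≤ lam k.1 := hnn k.1 k.2
      by_cases hl : lam k.1 = 0
      · have hfe : (fun h : ℝ => ∫ s in (0:ℝ)..h, Real.exp (-2 * lam k.1 * s))
            = fun h : ℝ => h := by
          funext h; simp [hl]
        rw [hfe]
        exact (continuous_id.tendsto 0).mono_left (nhdsWithin_le_nhds (s := Set.Ioi 0))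
      · have ha : (-2 * lam k.1) ≠ 0 := by
          simp only [ne_eq, mul_eq_zero]; push_neg; exact ⟨by norm_num, hl⟩
        have hfe : (fun h : ℝ => ∫ s in (0:ℝ)..h, Real.exp (-2 * lam k.1 * s))
            = fun h : ℝ => (Real.exp (-2 * lam k.1 * h) - 1) / (-2 * lam k.1) := by
          funext h; exact int_exp_zero_to _ _ ha
        rw [hfe]
        have hcont : Continuous fun h : ℝ =>
            (Real.exp (-2 * lam k.1 * h) - 1) / (-2 * lam k.1) := by fun_prop
        have := (hcont.tendsto 0).mono_left (nhdsWithin_le_nhds (s := Set.Ioi 0))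
        simpa using this
    · filter_upwards [Ioo_mem_nhdsGT_of_mem (by constructor <;> norm_num : (0:ℝ) ∈ Set.Ico 0 1)]
        with h hh k
      obtain ⟨hh0, hh1⟩ := hh
      obtain ⟨CI0, CIle⟩ := key k k.2 h hh0.le (le_trans hh1.le (le_max_right T 1))
      rw [Real.norm_eq_abs, abs_of_nonneg CI0]
      exact CIle
end

section
/- Let (X, R) be a metric space equipped with a finite Borel measure μ, let L > 0, and let ρ : X × X → ℝ be a measurable function which is symmetric (ρ(z,y) = ρ(y,z)) and satisfies |ρ(z,y) − ρ(z,y')| ≤ L · R(y,y') for all z, y, y' ∈ X. Let x ∈ X, let δ₁, δ₂ > 0, and let f, g : X → [0,∞) be bounded measurable functions with ∫_X f dμ = ∫_X g dμ = 1 such that f vanishes outside the closed ball of radius δ₁ about x and g vanishes outside the closed ball of radius δ₂ about x. Then | ∫_X ∫_X ρ(z,y) (f(z) − g(z)) (f(y) − g(y)) μ(dz) μ(dy) | ≤ 4 L (δ₁ + δ₂). -/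
open MeasureTheory in
/-- Let `(X, R)` be a metric space with a finite Borel measure `μ`, let
`L > 0`, and let `ρ : X × X → ℝ` be measurable, symmetric, and `L`-Lipschitz in each
variable: `|ρ(z,y) − ρ(z,y')| ≤ L·R(y,y')`. Let `x ∈ X`, `δ₁, δ₂ > 0`, and let
`f, g : X → [0,∞)` be bounded measurable with `∫ f dμ = ∫ g dμ = 1`, `f` vanishing
outside the closed ball of radius `δ₁` about `x` and `g` outside that of radius `δ₂`.
Then `|∫∫ ρ(z,y)(f(z)−g(z))(f(y)−g(y)) dμ dμ| ≤ 4L(δ₁+δ₂)`. -/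
theorem stmt_19 {X : Type*} [MetricSpace X] [MeasurableSpace X] [BorelSpace X]
    (μ : Measure X) [IsFiniteMeasure μ]
    (L : ℝ) (hL : 0 < L) (ρ : X → X → ℝ)
    (hρmeas : Measurable (Function.uncurry ρ))
    (hρsymm : ∀ z y, ρ z y = ρ y z)
    (hρlip : ∀ z y y', |ρ z y - ρ z y'| ≤ L * dist y y')
    (x : X) (δ₁ δ₂ : ℝ) (hδ₁ : 0 < δ₁) (hδ₂ : 0 < δ₂)
    (f g : X → ℝ) (hfmeas : Measurable f) (hgmeas : Measurable g)
    (hfnn : ∀ z, 0 ≤ f z) (hgnn : ∀ z, 0 ≤ g z)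
    (hfbdd : ∃ M : ℝ, ∀ z, f z ≤ M) (hgbdd : ∃ M : ℝ, ∀ z, g z ≤ M)
    (hfint : ∫ z, f z ∂μ = 1) (hgint : ∫ z, g z ∂μ = 1)
    (hfsupp : ∀ z, z ∉ Metric.closedBall x δ₁ → f z = 0)
    (hgsupp : ∀ z, z ∉ Metric.closedBall x δ₂ → g z = 0) :
    |∫ z, ∫ y, ρ z y * (f z - g z) * (f y - g y) ∂μ ∂μ| ≤ 4 * L * (δ₁ + δ₂) := by
  obtain ⟨Mf, hMf⟩ := hfbdd
  obtain ⟨Mg, hMg⟩ := hgbdd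
  have hf : Integrable f μ := by
    refine (integrable_const Mf).mono' hfmeas.aestronglyMeasurable (ae_of_all _ fun z => ?_)
    rw [Real.norm_eq_abs, abs_of_nonneg (hfnn z)]; exact hMf z
  have hg : Integrable g μ := by
    refine (integrable_const Mg).mono' hgmeas.aestronglyMeasurable (ae_of_all _ fun z => ?_)
    rw [Real.norm_eq_abs, abs_of_nonneg (hgnn z)]; exact hMg z
  have hh : Integrable (fun z => f z - g z) μ := hf.sub hg
  have hhint : ∫ z, (f z - g z) ∂μ = 0 := by
    rw [integral_sub hf hg, hfint, hgint]; ring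
  set G : X → ℝ := fun y => L * (δ₁ * f y + δ₂ * g y) with hGdef
  have hGint : Integrable G μ := ((hf.const_mul δ₁).add (hg.const_mul δ₂)).const_mul L
  have hGval : ∫ y, G y ∂μ = L * (δ₁ + δ₂) := by
    rw [hGdef]
    rw [integral_const_mul, integral_add (hf.const_mul δ₁) (hg.const_mul δ₂),
      integral_const_mul, integral_const_mul, hfint, hgint]
    ring
  have key : ∀ z y, |(ρ z y - ρ z x) * (f y - g y)| ≤ G y := by
    intro z y
    have h1 : |ρ z y - ρ z x| ≤ L * dist y x := hρlip z y x
    have h2 : |f y - g y| ≤ f y + g y := by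
      rw [abs_sub_le_iff]
      constructor <;> nlinarith [hfnn y, hgnn y]
    have hdf : dist y x * f y ≤ δ₁ * f y := by
      by_cases hy : y ∈ Metric.closedBall x δ₁
      · exact mul_le_mul_of_nonneg_right (Metric.mem_closedBall.mp hy) (hfnn y)
      · simp [hfsupp y hy]
    have hdg : dist y x * g y ≤ δ₂ * g y := by
      by_cases hy : y ∈ Metric.closedBall x δ₂
      · exact mul_le_mul_of_nonneg_right (Metric.mem_closedBall.mp hy) (hgnn y)
      · simp [hgsupp y hy]
    calc |(ρ z y - ρ z x) * (f y - g y)| = |ρ z y - ρ z x| * |f y - g y| := abs_mul _ _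
      _ ≤ (L * dist y x) * (f y + g y) := by
          apply mul_le_mul h1 h2 (abs_nonneg _)
          positivity
      _ = L * (dist y x * f y + dist y x * g y) := by ring
      _ ≤ L * (δ₁ * f y + δ₂ * g y) :=
          mul_le_mul_of_nonneg_left (add_le_add hdf hdg) hL.le
  have hΦbound : ∀ z, |∫ y, ρ z y * (f y - g y) ∂μ| ≤ L * (δ₁ + δ₂) := by
    intro z
    have hmz : Measurable fun y => ρ z y := hρmeas.of_uncurry_left
    have hint1 : Integrable (fun y => (ρ z y - ρ z x) * (f y - g y)) μ := by
      refine hGint.mono' ((hmz.sub measurable_const).mul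
        (hfmeas.sub hgmeas)).aestronglyMeasurable (ae_of_all _ fun y => ?_)
      rw [Real.norm_eq_abs]; exact key z y
    have heq : (∫ y, ρ z y * (f y - g y) ∂μ)
        = ∫ y, (ρ z y - ρ z x) * (f y - g y) ∂μ := by
      have h0 : ∫ y, ρ z y * (f y - g y) ∂μ
          = ∫ y, ((ρ z y - ρ z x) * (f y - g y) + ρ z x * (f y - g y)) ∂μ := by
        congr 1; funext y; ring
      rw [h0, integral_add hint1 (hh.const_mul _), integral_const_mul, hhint,
        mul_zero, add_zero]
    rw [heq, ← Real.norm_eq_abs]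
    calc ‖∫ y, (ρ z y - ρ z x) * (f y - g y) ∂μ‖ ≤ ∫ y, G y ∂μ := by
          refine norm_integral_le_of_norm_le hGint (ae_of_all _ fun y => ?_)
          rw [Real.norm_eq_abs]; exact key z y
      _ = L * (δ₁ + δ₂) := hGval
  have houter : (∫ z, ∫ y, ρ z y * (f z - g z) * (f y - g y) ∂μ ∂μ)
      = ∫ z, (f z - g z) * ∫ y, ρ z y * (f y - g y) ∂μ ∂μ := by
    congr 1; funext z
    rw [← integral_const_mul]
    congr 1; funext y; ring
  rw [houter, ← Real.norm_eq_abs]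
  have hB : Integrable (fun z => (f z + g z) * (L * (δ₁ + δ₂))) μ := (hf.add hg).mul_const _
  calc ‖∫ z, (f z - g z) * ∫ y, ρ z y * (f y - g y) ∂μ ∂μ‖
      ≤ ∫ z, (f z + g z) * (L * (δ₁ + δ₂)) ∂μ := by
        refine norm_integral_le_of_norm_le hB (ae_of_all _ fun z => ?_)
        rw [Real.norm_eq_abs, abs_mul]
        have h2 : |f z - g z| ≤ f z + g z := by
          rw [abs_sub_le_iff]
          constructor <;> nlinarith [hfnn z, hgnn z]
        have h3 : |∫ y, ρ z y * (f y - g y) ∂μ| ≤ L * (δ₁ + δ₂) := hΦbound z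
        have : (0:ℝ) ≤ L * (δ₁ + δ₂) := by positivity
        exact mul_le_mul h2 h3 (abs_nonneg _) (by nlinarith [hfnn z, hgnn z])
    _ = 2 * (L * (δ₁ + δ₂)) := by
        rw [integral_mul_const, integral_add hf hg, hfint, hgint]; ring
    _ ≤ 4 * L * (δ₁ + δ₂) := by nlinarith
end
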